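/- Under the hypotheses of the convergence property (f(0)=0, [J] an inclusion-monotone interval extension of the Jacobian, Ψ([x]) = [J]([x])·[x], Ψ([x]) ⊆ α·[x] with 0 ≤ α < 1, and 0 ∈ [x]), every orbit of f starting in [x] converges to 0: for all x_0 ∈ [x], the sequence x_{k+1} = f(x_k) satisfies lim_{k→∞} ‖x_k‖ = 0, and moreover ‖x_k‖ ≤ α^k ‖[x]‖. -/

import Mathlib

lemma scal_mem (c q1 q2 b : ℝ) (h1 : q1 ≤ b) (h2 : b ≤ q2) :
    min (c*q1) (c*q2) ≤ c*b ∧ c*b ≤ max (c*q1) (c*q2) := by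
  rcases le_total 0 c with h | h
  · exact ⟨(min_le_left _ _).trans (mul_le_mul_of_nonneg_left h1 h),
      (mul_le_mul_of_nonneg_left h2 h).trans (le_max_right _ _)⟩
  · exact ⟨(min_le_right _ _).trans (mul_le_mul_of_nonpos_left h2 h),
      (mul_le_mul_of_nonpos_left h1 h).trans (le_max_left _ _)⟩

lemma mem_imul' (p q : ℝ × ℝ) (a b : ℝ) (ha1 : p.1 ≤ a) (ha2 : a ≤ p.2)
    (hb1 : q.1 ≤ b) (hb2 : b ≤ q.2) :
    (min (min (p.1 * q.1) (p.1 * q.2)) (min (p.2 * q.1) (p.2 * q.2))) ≤ a*b ∧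
    a*b ≤ (max (max (p.1 * q.1) (p.1 * q.2)) (max (p.2 * q.1) (p.2 * q.2))) := by
  have h1 := scal_mem p.1 q.1 q.2 b hb1 hb2
  have h2 := scal_mem p.2 q.1 q.2 b hb1 hb2
  have h3 := scal_mem b p.1 p.2 a ha1 ha2
  constructor
  · calc min (min (p.1*q.1) (p.1*q.2)) (min (p.2*q.1) (p.2*q.2))
        ≤ min (p.1*b) (p.2*b) := le_min ((min_le_left _ _).trans h1.1) ((min_le_right _ _).trans h2.1)
      _ ≤ a*b := by simpa [mul_comm] using h3.1
  · calc a*b ≤ max (p.1*b) (p.2*b) := by simpa [mul_comm] using h3.2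
      _ ≤ max (max (p.1*q.1) (p.1*q.2)) (max (p.2*q.1) (p.2*q.2)) :=
          max_le (h1.2.trans (le_max_left _ _)) (h2.2.trans (le_max_right _ _))

lemma mvt_comp {n : ℕ} (f : (Fin n → ℝ) → (Fin n → ℝ)) (hf : ContDiff ℝ 1 f)
    (hf0 : f 0 = 0) (w : Fin n → ℝ) (i : Fin n) :
    ∃ c ∈ Set.Ioo (0:ℝ) 1, f w i = fderiv ℝ f (c • w) w i := by
  have hdf : Differentiable ℝ f := hf.differentiable one_ne_zero
  set g : ℝ → ℝ := fun t => f (t • w) i with hg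
  have hgd : ∀ t : ℝ, HasDerivAt g (fderiv ℝ f (t • w) w i) t := by
    intro t
    have h1 : HasDerivAt (fun t : ℝ => t • w) w t := by
      simpa using (hasDerivAt_id t).smul_const w
    have h2 : HasFDerivAt f (fderiv ℝ f (t • w)) (t • w) := (hdf (t • w)).hasFDerivAt
    have h3 : HasDerivAt (fun t : ℝ => f (t • w)) (fderiv ℝ f (t • w) w) t :=
      h2.comp_hasDerivAt t h1
    have h4 := ((ContinuousLinearMap.proj i : (Fin n → ℝ) →L[ℝ] ℝ).hasFDerivAt).comp_hasDerivAt t h3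
    exact h4
  obtain ⟨c, hc, hce⟩ := exists_hasDerivAt_eq_slope g (fun t => fderiv ℝ f (t • w) w i)
    one_pos (fun t _ => (hgd t).continuousAt.continuousWithinAt) (fun t _ => hgd t)
  refine ⟨c, hc, ?_⟩
  have h1 : g 1 = f w i := by simp [hg]
  have h0 : g 0 = 0 := by simp [hg, hf0]
  rw [hce, h1, h0]
  ring

lemma fderiv_decomp {n : ℕ} (L : (Fin n → ℝ) →L[ℝ] (Fin n → ℝ)) (w : Fin n → ℝ) (i : Fin n) :
    L w i = ∑ j, L (Pi.single j 1) i * w j := by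
  have hw : w = ∑ j, w j • (Pi.single j 1 : Fin n → ℝ) := by
    ext k; simp [Pi.single_apply, Finset.sum_apply]
  conv_lhs => rw [hw]
  rw [map_sum]
  simp [Finset.sum_apply, mul_comm]



/-- Interval product: hull of `{a*b : a ∈ p, b ∈ q}` (corner formula). -/
noncomputable def imul (p q : ℝ × ℝ) : ℝ × ℝ :=
  (min (min (p.1 * q.1) (p.1 * q.2)) (min (p.2 * q.1) (p.2 * q.2)),
   max (max (p.1 * q.1) (p.1 * q.2)) (max (p.2 * q.1) (p.2 * q.2)))

/-- Interval matrix – box product: `([A]·[x])_i = Σ_j [A]_{ij}·[x]_j`. -/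
noncomputable def prodMV {n : ℕ} (A : Fin n → Fin n → ℝ × ℝ) (x : Fin n → ℝ × ℝ) :
    Fin n → ℝ × ℝ :=
  fun i => ∑ j, imul (A i j) (x j)

/-- Interval inclusion. -/
def isub (p q : ℝ × ℝ) : Prop := q.1 ≤ p.1 ∧ p.2 ≤ q.2

/-- Box inclusion. -/
def bsub {n : ℕ} (a b : Fin n → ℝ × ℝ) : Prop := ∀ i, isub (a i) (b i)

/-- Componentwise scaling of a box by `α ≥ 0`. -/
def bscale {n : ℕ} (α : ℝ) (a : Fin n → ℝ × ℝ) : Fin n → ℝ × ℝ :=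
  fun i => (α * (a i).1, α * (a i).2)

/-- Membership of a point in a box. -/
def bmem {n : ℕ} (x : Fin n → ℝ) (b : Fin n → ℝ × ℝ) : Prop :=
  ∀ j, (b j).1 ≤ x j ∧ x j ≤ (b j).2

/-- under the hypotheses of the convergence property, every orbit of `f`
starting in `[x]` converges to 0, with `‖x_k‖ ≤ α^k ‖[x]‖` (sup norms). -/
theorem stmt_9 {n : ℕ} (f : (Fin n → ℝ) → (Fin n → ℝ)) (hf : ContDiff ℝ 1 f)
    (hf0 : f 0 = 0)
    (JI : (Fin n → ℝ × ℝ) → (Fin n → Fin n → ℝ × ℝ))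
    (hJext : ∀ (b : Fin n → ℝ × ℝ) (x : Fin n → ℝ), bmem x b →
      ∀ i j, (JI b i j).1 ≤ fderiv ℝ f x (Pi.single j 1) i ∧
        fderiv ℝ f x (Pi.single j 1) i ≤ (JI b i j).2)
    (hJvalid : ∀ b : Fin n → ℝ × ℝ, (∀ j, (b j).1 ≤ (b j).2) →
      ∀ i j, (JI b i j).1 ≤ (JI b i j).2)
    (hJmono : ∀ a b, bsub a b → ∀ i j, isub (JI a i j) (JI b i j))
    (x : Fin n → ℝ × ℝ) (hvx : ∀ i, (x i).1 ≤ (x i).2)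
    (h0x : ∀ i, (x i).1 ≤ 0 ∧ 0 ≤ (x i).2)
    (α : ℝ) (hα0 : 0 ≤ α) (hα1 : α < 1)
    (hc : bsub (prodMV (JI x) x) (bscale α x)) :
    ∀ x0 : Fin n → ℝ, bmem x0 x →
      (∀ k : ℕ, ‖f^[k] x0‖ ≤ α ^ k * (⨆ i, max |(x i).1| |(x i).2|)) ∧
      Filter.Tendsto (fun k => ‖f^[k] x0‖) Filter.atTop (nhds 0) := by
  intro x0 hx0
  set M := ⨆ i, max |(x i).1| |(x i).2| with hM
  have hMnn : 0 ≤ M := Real.iSup_nonneg fun i => le_max_of_le_left (abs_nonneg _)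
  -- key contraction step
  have key : ∀ β : ℝ, 0 ≤ β → β ≤ 1 → ∀ w, bmem w (bscale β x) →
      bmem (f w) (bscale (α*β) x) := by
    intro β hβ0 hβ1 w hw
    rcases eq_or_lt_of_le hβ0 with h0 | hβpos
    · -- β = 0 : w = 0
      have hw0 : w = 0 := by
        funext j
        have h := hw j
        simp only [bscale, ← h0, zero_mul] at h
        have := h.1; have := h.2
        simp; linarith
      intro j
      simp [hw0, hf0, bscale, ← h0]
    · intro i
      obtain ⟨c, hcIoo, hfe⟩ := mvt_comp f hf hf0 w i
      set ξ := c • w with hξdef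
      have hξ : bmem ξ x := by
        intro j
        have hwj := hw j
        simp only [bscale] at hwj
        have hx1 := (h0x j).1
        have hx2 := (h0x j).2
        have hc1 := hcIoo.1
        have hc2 := hcIoo.2
        have hξj : ξ j = c * w j := by simp [hξdef]
        rw [hξj]
        have hcb : c * β ≤ 1 := by nlinarith
        have hcb0 : 0 ≤ c * β := mul_nonneg hc1.le hβ0
        constructor
        · nlinarith [mul_le_mul_of_nonneg_left hwj.1 hc1.le,
            mul_nonneg (by linarith : (0:ℝ) ≤ 1 - c*β) (by linarith : (0:ℝ) ≤ -(x j).1)]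
        · nlinarith [mul_le_mul_of_nonneg_left hwj.2 hc1.le,
            mul_nonneg (by linarith : (0:ℝ) ≤ 1 - c*β) (by linarith : (0:ℝ) ≤ (x j).2)]
      have hA := hJext x ξ hξ
      set w' : Fin n → ℝ := β⁻¹ • w with hw'def
      have hβne : β ≠ 0 := ne_of_gt hβpos
      have hw'j : ∀ j, w' j = β⁻¹ * w j := by intro j; simp [hw'def]
      have hw' : bmem w' x := by
        intro j
        have hwj := hw j
        simp only [bscale] at hwj
        rw [hw'j j]
        constructor
        · have := mul_le_mul_of_nonneg_left hwj.1 (inv_nonneg.mpr hβ0)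
          simpa [inv_mul_cancel_left₀ hβne] using this
        · have := mul_le_mul_of_nonneg_left hwj.2 (inv_nonneg.mpr hβ0)
          simpa [inv_mul_cancel_left₀ hβne] using this
      -- the sum S = Σ_j A_j * w'_j lies in prodMV (JI x) x i
      set S := ∑ j, fderiv ℝ f ξ (Pi.single j 1) i * w' j with hS
      have hSlow : (prodMV (JI x) x i).1 ≤ S := by
        have : (prodMV (JI x) x i).1 = ∑ j, (imul (JI x i j) (x j)).1 := by
          simp [prodMV, Prod.fst_sum]
        rw [this, hS]
        refine Finset.sum_le_sum fun j _ => ?_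
        exact (mem_imul' (JI x i j) (x j) _ _ (hA i j).1 (hA i j).2 (hw' j).1 (hw' j).2).1
      have hShigh : S ≤ (prodMV (JI x) x i).2 := by
        have : (prodMV (JI x) x i).2 = ∑ j, (imul (JI x i j) (x j)).2 := by
          simp [prodMV, Prod.snd_sum]
        rw [this, hS]
        refine Finset.sum_le_sum fun j _ => ?_
        exact (mem_imul' (JI x i j) (x j) _ _ (hA i j).1 (hA i j).2 (hw' j).1 (hw' j).2).2
      have hcon := hc i
      simp only [isub, bscale] at hcon
      have hSin : α * (x i).1 ≤ S ∧ S ≤ α * (x i).2 :=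
        ⟨hcon.1.trans hSlow, hShigh.trans hcon.2⟩
      -- f w i = β * S
      have hfwi : f w i = β * S := by
        rw [hfe, fderiv_decomp, hS, Finset.mul_sum]
        refine Finset.sum_congr rfl fun j _ => ?_
        rw [hw'j j]
        field_simp
      simp only [bscale]
      rw [hfwi]
      constructor
      · have := mul_le_mul_of_nonneg_left hSin.1 hβ0
        nlinarith
      · have := mul_le_mul_of_nonneg_left hSin.2 hβ0
        nlinarith
  -- orbit stays in the shrinking boxes
  have orbit : ∀ k, bmem (f^[k] x0) (bscale (α^k) x) := by
    intro k
    induction k with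
    | zero => simpa [bmem, bscale] using hx0
    | succ k ih =>
      have h := key (α^k) (pow_nonneg hα0 k) (pow_le_one₀ hα0 hα1.le) _ ih
      rw [Function.iterate_succ_apply']
      intro j
      have := h j
      simp only [bscale] at this ⊢
      rw [pow_succ]
      constructor
      · calc α^k * α * (x j).1 = α * α^k * (x j).1 := by ring
          _ ≤ _ := this.1
      · calc (f (f^[k] x0)) j ≤ α * α^k * (x j).2 := this.2
          _ = α^k * α * (x j).2 := by ring
  -- norm bound
  have hbound : ∀ k, ‖f^[k] x0‖ ≤ α^k * M := by
    intro k
    have hk0 : (0:ℝ) ≤ α^k := pow_nonneg hα0 k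
    have h1 : 0 ≤ α^k*M := mul_nonneg hk0 hMnn
    rw [pi_norm_le_iff_of_nonneg h1]
    intro i
    have ho := orbit k i
    simp only [bscale] at ho
    rw [Real.norm_eq_abs, abs_le]
    have hle : max |(x i).1| |(x i).2| ≤ M :=
      le_ciSup (f := fun i => max |(x i).1| |(x i).2|)
        (Set.Finite.bddAbove (Set.finite_range _)) i
    have hm1 : |(x i).1| ≤ M := (le_max_left _ _).trans hle
    have hm2 : |(x i).2| ≤ M := (le_max_right _ _).trans hle
    have hn1 : -M ≤ (x i).1 := by
      have := neg_abs_le (x i).1; linarith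
    have hn2 : (x i).2 ≤ M := (le_abs_self _).trans hm2
    have p1 : α^k * (x i).2 ≤ α^k * M := mul_le_mul_of_nonneg_left hn2 hk0
    have p2 : α^k * (-M) ≤ α^k * (x i).1 := mul_le_mul_of_nonneg_left hn1 hk0
    constructor
    · nlinarith [ho.1]
    · linarith [ho.2]
  refine ⟨hbound, ?_⟩
  have hlim : Filter.Tendsto (fun k : ℕ => α^k * M) Filter.atTop (nhds 0) := by
    simpa using (tendsto_pow_atTop_nhds_zero_of_lt_one hα0 hα1).mul_const M
  exact squeeze_zero (fun k => norm_nonneg _) hbound hlim
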